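/- Let a, b > −1 and let μ_{a,b} be the measure on [−1, 1] with density w_{a,b}(x) = (1 − x)^a·(1 + x)^b with respect to Lebesgue measure. For each i ≥ 1, let p_i be any nonzero real polynomial of degree i orthogonal with respect to μ_{a,b} to all polynomials of degree at most i − 1, and let ξ_i be its smallest real root. Then ξ_i = −1 + Θ(1/i²): there exist constants c, C > 0 (depending only on a and b) such that −1 + c/i² ≤ ξ_i ≤ −1 + C/i² for all i ≥ 1. -/

import Mathlib

open MeasureTheory Polynomial Set
open scoped ENNReal NNReal

noncomputable section

/-- The Jacobi measure `w_{a,b}(x) dx = (1-x)^a (1+x)^b dx` on `[-1,1]`. -/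
def jacobiMeasure (a b : ℝ) : Measure ℝ :=
  (volume.restrict (Icc (-1 : ℝ) 1)).withDensity
    (fun x => ENNReal.ofReal ((1 - x) ^ a * (1 + x) ^ b))

namespace JacobiProof

/-- The Jacobi weight. -/
def W (a b : ℝ) (x : ℝ) : ℝ := (1 - x) ^ a * (1 + x) ^ b

variable {a b : ℝ}

lemma measurable_rpow_const (c : ℝ) : Measurable (fun x : ℝ => x ^ c) := by
  have hfun : (fun x : ℝ => x ^ c) = fun x : ℝ =>
      if x = 0 then (if c = 0 then 1 else 0)
      else Real.exp (Real.log x * c) * (if x < 0 then Real.cos (c * Real.pi) else 1) := by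
    funext x
    rcases lt_trichotomy x 0 with h | h | h
    · simp only [if_neg h.ne, if_pos h]
      rw [Real.rpow_def_of_neg h]
    · subst h
      by_cases hc : c = 0
      · simp [hc]
      · simp [hc, Real.zero_rpow hc]
    · simp only [if_neg h.ne', if_neg (not_lt.mpr h.le), mul_one]
      rw [Real.rpow_def_of_pos h]
  rw [hfun]
  refine Measurable.ite (measurableSet_eq_fun measurable_id measurable_const)
    measurable_const ?_
  exact ((Real.measurable_log.mul measurable_const).exp).mul
    (Measurable.ite (measurableSet_lt measurable_id measurable_const)
      measurable_const measurable_const)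

lemma measurable_W (a b : ℝ) : Measurable (W a b) :=
  ((measurable_rpow_const a).comp (measurable_const.sub measurable_id)).mul
    ((measurable_rpow_const b).comp (measurable_const.add measurable_id))

lemma W_nonneg (x : ℝ) (hx : x ∈ Icc (-1:ℝ) 1) : 0 ≤ W a b x :=
  mul_nonneg (Real.rpow_nonneg (by linarith [hx.2]) a)
    (Real.rpow_nonneg (by linarith [hx.1]) b)

lemma W_pos (x : ℝ) (hx : x ∈ Ioo (-1:ℝ) 1) : 0 < W a b x :=
  mul_pos (Real.rpow_pos_of_pos (by linarith [hx.2]) a)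
    (Real.rpow_pos_of_pos (by linarith [hx.1]) b)

lemma jacobiMeasure_eq (a b : ℝ) :
    jacobiMeasure a b
      = (volume.restrict (Icc (-1 : ℝ) 1)).withDensity
          (fun x => ((W a b x).toNNReal : ℝ≥0∞)) := rfl

lemma integral_jacobi (f : ℝ → ℝ) :
    ∫ x, f x ∂(jacobiMeasure a b) = ∫ x in Icc (-1:ℝ) 1, W a b x * f x := by
  rw [jacobiMeasure_eq,
    integral_withDensity_eq_integral_smul ((measurable_W a b).real_toNNReal) f]
  refine setIntegral_congr_fun measurableSet_Icc (fun x hx => ?_)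
  simp [NNReal.smul_def, Real.coe_toNNReal _ (W_nonneg x hx)]

lemma integrableOn_W (ha : -1 < a) (hb : -1 < b) :
    IntegrableOn (W a b) (Icc (-1:ℝ) 1) volume := by
  have h1 : IntegrableOn (fun x : ℝ => (1 + x) ^ b) (Icc (-1:ℝ) 0) volume := by
    have h := (intervalIntegral.intervalIntegrable_rpow' (a := 0) (b := 1) hb).comp_add_right 1
    norm_num at h
    rw [intervalIntegrable_iff_integrableOn_Icc_of_le (by norm_num)] at h
    simpa [add_comm] using h
  have h2 : IntegrableOn (fun x : ℝ => (1 - x) ^ a) (Icc (0:ℝ) 1) volume := by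
    have h := ((intervalIntegral.intervalIntegrable_rpow' (a := 0) (b := 1) ha).comp_sub_left 1).symm
    norm_num at h
    rw [intervalIntegrable_iff_integrableOn_Icc_of_le (by norm_num)] at h
    exact h
  have hW1 : IntegrableOn (W a b) (Icc (-1:ℝ) 0) volume := by
    refine Integrable.mono' (h1.const_mul (max (2 ^ a) 1))
      (measurable_W a b).aestronglyMeasurable ?_
    filter_upwards [ae_restrict_mem measurableSet_Icc] with x hx
    have hx1 : (0:ℝ) ≤ 1 + x := by linarith [hx.1]
    have hx2 : (1:ℝ) ≤ 1 - x := by linarith [hx.2]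
    have hx3 : (1:ℝ) - x ≤ 2 := by linarith [hx.1]
    have hb0 : (0:ℝ) ≤ (1+x) ^ b := Real.rpow_nonneg hx1 b
    have hle : (1 - x) ^ a ≤ max (2 ^ a) 1 := by
      rcases le_or_gt 0 a with h | h
      · exact le_max_of_le_left (Real.rpow_le_rpow (by linarith) hx3 h)
      · exact le_max_of_le_right (Real.rpow_le_one_of_one_le_of_nonpos hx2 h.le)
    have hnn : 0 ≤ W a b x := mul_nonneg (Real.rpow_nonneg (by linarith) a) hb0
    rw [Real.norm_eq_abs, abs_of_nonneg hnn]
    calc W a b x = (1-x)^a * (1+x)^b := rfl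
    _ ≤ max (2 ^ a) 1 * (1+x)^b := mul_le_mul_of_nonneg_right hle hb0
  have hW2 : IntegrableOn (W a b) (Icc (0:ℝ) 1) volume := by
    refine Integrable.mono' (h2.const_mul (max (2 ^ b) 1))
      (measurable_W a b).aestronglyMeasurable ?_
    filter_upwards [ae_restrict_mem measurableSet_Icc] with x hx
    have hx1 : (0:ℝ) ≤ 1 - x := by linarith [hx.2]
    have hx2 : (1:ℝ) ≤ 1 + x := by linarith [hx.1]
    have hx3 : (1:ℝ) + x ≤ 2 := by linarith [hx.2]
    have ha0 : (0:ℝ) ≤ (1-x) ^ a := Real.rpow_nonneg hx1 a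
    have hle : (1 + x) ^ b ≤ max (2 ^ b) 1 := by
      rcases le_or_gt 0 b with h | h
      · exact le_max_of_le_left (Real.rpow_le_rpow (by linarith) hx3 h)
      · exact le_max_of_le_right (Real.rpow_le_one_of_one_le_of_nonpos hx2 h.le)
    have hnn : 0 ≤ W a b x := mul_nonneg ha0 (Real.rpow_nonneg (by linarith) b)
    rw [Real.norm_eq_abs, abs_of_nonneg hnn]
    calc W a b x = (1-x)^a * (1+x)^b := rfl
    _ = (1+x)^b * (1-x)^a := by ring
    _ ≤ max (2 ^ b) 1 * (1-x)^a := mul_le_mul_of_nonneg_right hle ha0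
  have hu : Icc (-1:ℝ) 0 ∪ Icc (0:ℝ) 1 = Icc (-1:ℝ) 1 :=
    Icc_union_Icc_eq_Icc (by norm_num) (by norm_num)
  have := hW1.union hW2
  rwa [hu] at this

lemma integrableOn_W_mul (ha : -1 < a) (hb : -1 < b) (φ : ℝ → ℝ) (hφ : Continuous φ) :
    IntegrableOn (fun x => W a b x * φ x) (Icc (-1:ℝ) 1) volume := by
  obtain ⟨M, hM⟩ := isCompact_Icc.exists_bound_of_continuousOn hφ.continuousOn
  refine Integrable.mono' ((integrableOn_W ha hb).const_mul M)
    ((measurable_W a b).mul hφ.measurable).aestronglyMeasurable ?_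
  filter_upwards [ae_restrict_mem measurableSet_Icc] with x hx
  have hnn : 0 ≤ W a b x := W_nonneg x hx
  have hMx : |φ x| ≤ M := by simpa [Real.norm_eq_abs] using hM x hx
  rw [Real.norm_eq_abs, abs_mul, abs_of_nonneg hnn]
  calc W a b x * |φ x| ≤ W a b x * M := mul_le_mul_of_nonneg_left hMx hnn
  _ = M * W a b x := by ring

lemma integrable_jacobi (ha : -1 < a) (hb : -1 < b) (φ : ℝ → ℝ) (hφ : Continuous φ) :
    Integrable φ (jacobiMeasure a b) := by
  rw [show jacobiMeasure a b = (volume.restrict (Icc (-1 : ℝ) 1)).withDensity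
      (fun x => ENNReal.ofReal (W a b x)) from rfl,
    integrable_withDensity_iff ((measurable_W a b).ennreal_ofReal)
      (ae_of_all _ fun x => ENNReal.ofReal_lt_top)]
  refine (integrableOn_W_mul ha hb φ hφ).congr ?_
  filter_upwards [ae_restrict_mem measurableSet_Icc] with x hx
  rw [ENNReal.toReal_ofReal (W_nonneg x hx)]
  ring

lemma integral_ne_zero_of_nonneg (ha : -1 < a) (hb : -1 < b) (g : Polynomial ℝ) (hg : g ≠ 0)
    (hpos : ∀ x ∈ Ioo (-1:ℝ) 1, 0 ≤ eval x g) :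
    (∫ x, eval x g ∂(jacobiMeasure a b)) ≠ 0 := by
  intro h0
  have hint : Integrable (fun x => eval x g) (jacobiMeasure a b) :=
    integrable_jacobi ha hb _ g.continuous
  have hmeasS : MeasurableSet {x : ℝ | eval x g < 0} :=
    measurableSet_lt g.continuous.measurable measurable_const
  have hae : 0 ≤ᵐ[jacobiMeasure a b] fun x => eval x g := by
    rw [Filter.EventuallyLE, ae_iff]
    simp only [Pi.zero_apply]
    refine withDensity_absolutelyContinuous _ _ ?_
    have : {x : ℝ | ¬ (0:ℝ) ≤ eval x g} = {x : ℝ | eval x g < 0} := by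
      ext x; simp [not_le]
    rw [this, Measure.restrict_apply hmeasS]
    refine measure_mono_null (fun x hx => ?_) (?_ : volume ({-1, 1} : Set ℝ) = 0)
    · rcases hx with ⟨hlt, hmem⟩
      rcases eq_or_lt_of_le hmem.1 with h | h
      · exact Or.inl h.symm
      rcases eq_or_lt_of_le hmem.2 with h' | h'
      · exact Or.inr h'
      · exact absurd (hpos x ⟨h, h'⟩) (not_le.mpr hlt)
    · exact ((Set.finite_singleton (1:ℝ)).insert (-1)).measure_zero _
  have hzero := (integral_eq_zero_iff_of_nonneg_ae hae hint).mp h0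
  have hnull : jacobiMeasure a b {x : ℝ | eval x g ≠ 0} = 0 := by
    have := hzero
    rw [Filter.EventuallyEq, ae_iff] at this
    exact this
  have hmeasN : MeasurableSet {x : ℝ | eval x g ≠ 0} :=
    (measurableSet_eq_fun g.continuous.measurable measurable_const).compl
  rw [show jacobiMeasure a b = (volume.restrict (Icc (-1 : ℝ) 1)).withDensity
      (fun x => ENNReal.ofReal (W a b x)) from rfl,
    withDensity_apply_eq_zero ((measurable_W a b).ennreal_ofReal)] at hnull
  have hmeasB : MeasurableSet ({x : ℝ | ENNReal.ofReal (W a b x) ≠ 0} ∩ {x : ℝ | eval x g ≠ 0}) :=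
    (((measurable_W a b).ennreal_ofReal) (measurableSet_singleton 0)).compl.inter hmeasN
  rw [Measure.restrict_apply hmeasB] at hnull
  have hsub : Ioo (-1:ℝ) 1 \ {x : ℝ | IsRoot g x}
      ⊆ ({x : ℝ | ENNReal.ofReal (W a b x) ≠ 0} ∩ {x : ℝ | eval x g ≠ 0}) ∩ Icc (-1:ℝ) 1 := by
    rintro x ⟨hx, hroot⟩
    refine ⟨⟨?_, hroot⟩, Ioo_subset_Icc_self hx⟩
    simp only [mem_setOf_eq, ne_eq, ENNReal.ofReal_eq_zero, not_le]
    exact W_pos x hx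
  have hvol : volume (Ioo (-1:ℝ) 1 \ {x : ℝ | IsRoot g x}) = 0 :=
    measure_mono_null hsub hnull
  have hroots : volume {x : ℝ | IsRoot g x} = 0 :=
    (Polynomial.finite_setOf_isRoot hg).measure_zero _
  have hle2 : volume (Ioo (-1:ℝ) 1) ≤ volume (Ioo (-1:ℝ) 1 \ {x : ℝ | IsRoot g x})
      + volume {x : ℝ | IsRoot g x} := by
    refine le_trans (measure_mono ?_) (measure_union_le _ _)
    intro x hx
    by_cases h : IsRoot g x
    · exact Or.inr h
    · exact Or.inl ⟨hx, h⟩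
  rw [hvol, hroots, add_zero] at hle2
  have h3 : volume (Ioo (-1:ℝ) 1) = 0 := le_antisymm hle2 (zero_le)
  rw [Real.volume_Ioo] at h3
  norm_num at h3

/-- The Jacobi differential operator. -/
def Lop (a b : ℝ) (f : Polynomial ℝ) : Polynomial ℝ :=
  derivative (derivative f) - X^2 * derivative (derivative f)
    + C (b - a) * derivative f - C (a + b + 2) * (X * derivative f)

lemma natDegree_Lop_le (f : Polynomial ℝ) : (Lop a b f).natDegree ≤ f.natDegree := by
  rw [natDegree_le_iff_coeff_eq_zero]
  intro m hm
  have h0 : f.coeff m = 0 := coeff_eq_zero_of_natDegree_lt hm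
  have h1 : f.coeff (m+1) = 0 := coeff_eq_zero_of_natDegree_lt (by omega)
  have h2 : f.coeff (m+2) = 0 := coeff_eq_zero_of_natDegree_lt (by omega)
  have hdd : (derivative (derivative f)).coeff m = 0 := by
    rw [coeff_derivative, coeff_derivative, h2, zero_mul, zero_mul]
  have hXdd : (X^2 * derivative (derivative f)).coeff m = 0 := by
    rw [coeff_X_pow_mul']
    split_ifs with h
    · rw [coeff_derivative, coeff_derivative]
      rw [show m - 2 + 1 + 1 = m by omega, h0, zero_mul, zero_mul]
    · rfl
  have hd : (derivative f).coeff m = 0 := by rw [coeff_derivative, h1, zero_mul]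
  have hXd : (X * derivative f).coeff m = 0 := by
    rcases Nat.exists_eq_add_of_le (show 1 ≤ m by omega) with ⟨k, hk⟩
    subst hk
    rw [show 1 + k = k + 1 by omega, coeff_X_mul, coeff_derivative, show k + 1 = 1 + k by omega,
      h0, zero_mul]
  simp only [Lop, coeff_add, coeff_sub, coeff_C_mul, hdd, hXdd, hd, hXd, mul_zero,
    sub_zero, add_zero, zero_sub, neg_zero]

lemma natDegree_ODE {i : ℕ} (hi : 1 ≤ i) (f : Polynomial ℝ) (hf : f.natDegree = i) :
    (Lop a b f + C ((i:ℝ) * ((i:ℝ) + a + b + 1)) * f).natDegree ≤ i - 1 := by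
  rw [natDegree_le_iff_coeff_eq_zero]
  intro m hm
  have hm1 : i ≤ m := by omega
  rcases lt_or_eq_of_le hm1 with h | h
  · -- m > i : both coeff vanish
    have hL : (Lop a b f).natDegree < m := lt_of_le_of_lt (le_trans (natDegree_Lop_le f) (le_of_eq hf)) h
    have hfm : f.coeff m = 0 := coeff_eq_zero_of_natDegree_lt (by omega)
    rw [coeff_add, coeff_eq_zero_of_natDegree_lt hL, coeff_C_mul, hfm, mul_zero, add_zero]
  · -- m = i
    subst h
    have h1 : f.coeff (i+1) = 0 := coeff_eq_zero_of_natDegree_lt (by omega)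
    have h2 : f.coeff (i+2) = 0 := coeff_eq_zero_of_natDegree_lt (by omega)
    have hdd : (derivative (derivative f)).coeff i = 0 := by
      rw [coeff_derivative, coeff_derivative, h2, zero_mul, zero_mul]
    have hd : (derivative f).coeff i = 0 := by rw [coeff_derivative, h1, zero_mul]
    have hXd : (X * derivative f).coeff i = (i:ℝ) * f.coeff i := by
      rcases Nat.exists_eq_add_of_le (show 1 ≤ i by omega) with ⟨k, hk⟩
      have hk' : i = k + 1 := by omega
      rw [hk', coeff_X_mul, coeff_derivative]
      push_cast
      ring
    rcases lt_or_ge i 2 with h2m | h2m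
    · -- i = 1
      have hm1' : i = 1 := by omega
      have hXdd : (X^2 * derivative (derivative f)).coeff i = 0 := by
        rw [coeff_X_pow_mul', if_neg (by omega)]
      simp only [Lop, coeff_add, coeff_sub, coeff_C_mul, hdd, hXdd, hd, hXd, mul_zero,
        sub_zero, add_zero, zero_sub, neg_zero]
      rw [hm1']
      push_cast
      ring
    · have hXdd : (X^2 * derivative (derivative f)).coeff i
          = ((i:ℝ) - 1) * (i:ℝ) * f.coeff i := by
        rw [coeff_X_pow_mul', if_pos h2m, coeff_derivative, coeff_derivative,
          show i - 2 + 1 + 1 = i by omega, show i - 2 + 1 = i - 1 by omega]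
        have hcast : ((i - 1 : ℕ) : ℝ) = (i:ℝ) - 1 := by
          push_cast [Nat.cast_sub (show 1 ≤ i by omega)]; ring
        have hcast2 : ((i - 2 : ℕ) : ℝ) = (i:ℝ) - 2 := by
          push_cast [Nat.cast_sub (show 2 ≤ i by omega)]; ring
        rw [hcast, hcast2]
        ring
      simp only [Lop, coeff_add, coeff_sub, coeff_C_mul, hdd, hXdd, hd, hXd, mul_zero,
        sub_zero, add_zero, zero_sub, neg_zero]
      ring


lemma hasDerivAt_F (ha : -1 < a) (hb : -1 < b) (f g : Polynomial ℝ) {x : ℝ}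
    (hx : x ∈ Ioo (-1:ℝ) 1) :
    HasDerivAt (fun y => ((1-y)^(a+1) * (1+y)^(b+1)) * (eval y (derivative f) * eval y g))
      (W a b x * (eval x (Lop a b f) * eval x g)
        + ((1-x)^(a+1) * (1+x)^(b+1)) * (eval x (derivative f) * eval x (derivative g))) x := by
  have h1x : (0:ℝ) < 1 - x := by linarith [hx.2]
  have h2x : (0:ℝ) < 1 + x := by linarith [hx.1]
  have d1 := HasDerivAt.rpow_const (f := fun y : ℝ => 1 - y) (f' := -1) (p := a+1)
    ((hasDerivAt_id x).const_sub 1) (Or.inl h1x.ne')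
  have d2 := HasDerivAt.rpow_const (f := fun y : ℝ => 1 + y) (f' := 1) (p := b+1)
    ((hasDerivAt_id x).const_add 1) (Or.inl h2x.ne')
  have dV := d1.mul d2
  have dfg := (Polynomial.hasDerivAt (derivative f) x).mul (Polynomial.hasDerivAt g x)
  have dF := dV.mul dfg
  refine dF.congr_deriv ?_
  have e1 : (1-x)^(a+1) = (1-x)^a * (1-x) := Real.rpow_add_one h1x.ne' a
  have e2 : (1+x)^(b+1) = (1+x)^b * (1+x) := Real.rpow_add_one h2x.ne' b
  simp only [W, Lop, eval_add, eval_sub, eval_mul, eval_pow, eval_X, eval_C, e1, e2,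
    add_sub_cancel_right, Pi.mul_apply]
  ring

lemma parts (ha : -1 < a) (hb : -1 < b) (f g : Polynomial ℝ) :
    (∫ x, eval x (Lop a b f) * eval x g ∂(jacobiMeasure a b))
      = - ∫ x in (-1:ℝ)..1,
          ((1-x)^(a+1) * (1+x)^(b+1)) * (eval x (derivative f) * eval x (derivative g)) := by
  have hVcont : Continuous (fun x : ℝ => (1-x)^(a+1) * (1+x)^(b+1)) := by
    exact ((continuous_const.sub continuous_id).rpow_const
        (fun x => Or.inr (by linarith))).mul
      ((continuous_const.add continuous_id).rpow_const (fun x => Or.inr (by linarith)))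
  have hint1 : IntervalIntegrable
      (fun x => W a b x * (eval x (Lop a b f) * eval x g)) volume (-1) 1 := by
    rw [intervalIntegrable_iff_integrableOn_Icc_of_le (by norm_num)]
    exact integrableOn_W_mul ha hb _ ((Lop a b f).continuous.mul g.continuous)
  have hint2 : IntervalIntegrable
      (fun x => ((1-x)^(a+1) * (1+x)^(b+1)) * (eval x (derivative f) * eval x (derivative g)))
      volume (-1) 1 :=
    (hVcont.mul ((derivative f).continuous.mul (derivative g).continuous)).intervalIntegrable _ _
  have hFcont : ContinuousOn
      (fun y => ((1-y)^(a+1) * (1+y)^(b+1)) * (eval y (derivative f) * eval y g))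
      (Icc (-1:ℝ) 1) :=
    (hVcont.mul ((derivative f).continuous.mul g.continuous)).continuousOn
  have hFTC := intervalIntegral.integral_eq_sub_of_hasDeriv_right_of_le
    (by norm_num : (-1:ℝ) ≤ 1) hFcont
    (fun x hx => (hasDerivAt_F ha hb f g hx).hasDerivWithinAt)
    (hint1.add hint2)
  have hF1 : ((1-(1:ℝ))^(a+1) * (1+(1:ℝ))^(b+1)) * (eval 1 (derivative f) * eval 1 g) = 0 := by
    rw [show (1:ℝ) - 1 = 0 by norm_num, Real.zero_rpow (by linarith : a + 1 ≠ 0)]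
    ring
  have hFm1 : ((1-(-1:ℝ))^(a+1) * (1+(-1:ℝ))^(b+1))
      * (eval (-1) (derivative f) * eval (-1) g) = 0 := by
    rw [show (1:ℝ) + (-1) = 0 by norm_num, Real.zero_rpow (by linarith : b + 1 ≠ 0)]
    ring
  rw [intervalIntegral.integral_add hint1 hint2, hF1, hFm1] at hFTC
  have hmain : (∫ x in (-1:ℝ)..1, W a b x * (eval x (Lop a b f) * eval x g))
      = - ∫ x in (-1:ℝ)..1,
          ((1-x)^(a+1) * (1+x)^(b+1)) * (eval x (derivative f) * eval x (derivative g)) := by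
    linarith [hFTC]
  rw [integral_jacobi, integral_Icc_eq_integral_Ioc,
    ← intervalIntegral.integral_of_le (by norm_num : (-1:ℝ) ≤ 1), hmain]

lemma symm_Lop (ha : -1 < a) (hb : -1 < b) (f g : Polynomial ℝ) :
    (∫ x, eval x (Lop a b f) * eval x g ∂(jacobiMeasure a b))
      = ∫ x, eval x f * eval x (Lop a b g) ∂(jacobiMeasure a b) := by
  rw [parts ha hb f g]
  have h2 := parts ha hb g f
  have h3 : (∫ x, eval x f * eval x (Lop a b g) ∂(jacobiMeasure a b))
      = ∫ x, eval x (Lop a b g) * eval x f ∂(jacobiMeasure a b) :=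
    integral_congr_ae (Filter.Eventually.of_forall (fun x => by ring))
  rw [h3, h2]
  congr 1
  refine intervalIntegral.integral_congr (fun x hx => by ring)


lemma ODE (ha : -1 < a) (hb : -1 < b) {i : ℕ} (hi : 1 ≤ i) (p : Polynomial ℝ) (hp : p ≠ 0)
    (hdeg : p.natDegree = i)
    (horth : ∀ q : Polynomial ℝ, q.natDegree ≤ i - 1 →
      (∫ x, eval x p * eval x q ∂(jacobiMeasure a b)) = 0) :
    Lop a b p + C ((i:ℝ) * ((i:ℝ) + a + b + 1)) * p = 0 := by
  set lam := (i:ℝ) * ((i:ℝ) + a + b + 1) with hlam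
  set h := Lop a b p + C lam * p with hh
  have hdeg_h : h.natDegree ≤ i - 1 := natDegree_ODE hi p hdeg
  have horth_h : ∀ q : Polynomial ℝ, q.natDegree ≤ i - 1 →
      (∫ x, eval x h * eval x q ∂(jacobiMeasure a b)) = 0 := by
    intro q hq
    have hsplit : (fun x => eval x h * eval x q)
        = fun x => eval x (Lop a b p) * eval x q + lam * (eval x p * eval x q) := by
      funext x
      simp only [hh, eval_add, eval_mul, eval_C]
      ring
    rw [hsplit, integral_add (f := fun x => eval x (Lop a b p) * eval x q)
      (g := fun x => lam * (eval x p * eval x q))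
      (integrable_jacobi ha hb _ ((Lop a b p).continuous.mul q.continuous))
      ((integrable_jacobi ha hb _ (p.continuous.mul q.continuous)).const_mul lam),
      integral_const_mul, symm_Lop ha hb p q,
      horth (Lop a b q) (le_trans (natDegree_Lop_le q) hq), horth q hq]
    ring
  have hzero := horth_h h hdeg_h
  by_contra hne
  refine integral_ne_zero_of_nonneg ha hb (h * h) (mul_ne_zero hne hne)
    (fun x _ => by rw [eval_mul]; exact mul_self_nonneg _) ?_
  have : (fun x => eval x (h*h)) = fun x => eval x h * eval x h := by
    funext x; rw [eval_mul]
  rw [this]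
  exact hzero

lemma eval_relations (ha : -1 < a) (hb : -1 < b) (lam : ℝ) (p : Polynomial ℝ)
    (hODE : Lop a b p + C lam * p = 0) :
    2*(b+1) * eval (-1) (derivative p) + lam * eval (-1) p = 0 ∧
    2*(b+2) * eval (-1) (derivative (derivative p))
      = (a + b + 2 - lam) * eval (-1) (derivative p) := by
  constructor
  · have h1 := congrArg (eval (-1)) hODE
    simp only [Lop, eval_add, eval_sub, eval_mul, eval_pow, eval_X, eval_C, eval_zero] at h1
    linear_combination h1
  · have h2 := congrArg derivative hODE
    simp only [Lop, derivative_add, derivative_sub, derivative_mul, derivative_C,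
      derivative_X, derivative_zero, derivative_pow, derivative_X_pow] at h2
    have h3 := congrArg (eval (-1)) h2
    simp only [eval_add, eval_sub, eval_mul, eval_pow, eval_X, eval_C, eval_zero,
      eval_one, eval_natCast] at h3
    have h1 := congrArg (eval (-1)) hODE
    simp only [Lop, eval_add, eval_sub, eval_mul, eval_pow, eval_X, eval_C, eval_zero] at h1
    norm_num at h3
    linear_combination h3

lemma roots_structure (ha : -1 < a) (hb : -1 < b) {i : ℕ} (hi : 1 ≤ i) (p : Polynomial ℝ)
    (hp : p ≠ 0) (hdeg : p.natDegree = i)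
    (horth : ∀ q : Polynomial ℝ, q.natDegree ≤ i - 1 →
      (∫ x, eval x p * eval x q ∂(jacobiMeasure a b)) = 0) :
    Multiset.card p.roots = i ∧ (∀ ξ ∈ p.roots, ξ ∈ Ioo (-1:ℝ) 1) := by
  classical
  obtain ⟨u, hu⟩ := prod_multiset_X_sub_C_dvd p
  have hprodM : ((p.roots.map fun ξ => X - C ξ).prod).Monic :=
    monic_multiset_prod_of_monic _ _ (fun ξ _ => monic_X_sub_C ξ)
  have hu0 : u ≠ 0 := by
    rintro rfl
    rw [mul_zero] at hu
    exact hp hu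
  have hroots_u : u.roots = 0 := by
    have hne : (p.roots.map fun ξ => X - C ξ).prod * u ≠ 0 := hu ▸ hp
    have h1 : p.roots = p.roots + u.roots := by
      conv_lhs => rw [hu]
      rw [roots_mul hne, roots_multiset_prod_X_sub_C]
    exact (left_eq_add.mp h1)
  have hu_ne : ∀ x : ℝ, eval x u ≠ 0 := by
    intro x hx
    have hmem : x ∈ u.roots := (mem_roots hu0).mpr hx
    rw [hroots_u] at hmem
    simp at hmem
  have hIVT : ∀ x1 x2 : ℝ, eval x1 u < 0 → 0 < eval x2 u → False := by
    intro x1 x2 h1 h2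
    have hc : ContinuousOn (fun y => eval y u) (uIcc x1 x2) := u.continuous.continuousOn
    have hsub := intermediate_value_uIcc hc
    have h0 : (0:ℝ) ∈ uIcc (eval x1 u) (eval x2 u) := by
      rw [Set.mem_uIcc]
      left
      exact ⟨h1.le, h2.le⟩
    obtain ⟨y, _, hy⟩ := hsub h0
    exact hu_ne y hy
  have husign : (∀ x : ℝ, 0 < eval x u) ∨ (∀ x : ℝ, eval x u < 0) := by
    rcases lt_or_gt_of_ne (hu_ne 0) with h | h
    · right
      intro x
      rcases lt_or_gt_of_ne (hu_ne x) with h' | h'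
      · exact h'
      · exact (hIVT 0 x h h').elim
    · left
      intro x
      rcases lt_or_gt_of_ne (hu_ne x) with h' | h'
      · exact (hIVT x 0 h' h).elim
      · exact h'
  set sgn : ℝ := if 0 < eval 0 u then 1 else -1 with hsgn
  have hsgn_ne : sgn ≠ 0 := by
    rw [hsgn]; split_ifs <;> norm_num
  have hsgn_mul : ∀ x : ℝ, 0 ≤ sgn * eval x u := by
    intro x
    rcases husign with h | h
    · rw [hsgn, if_pos (h 0)]
      linarith [h x]
    · rw [hsgn, if_neg (not_lt.mpr (h 0).le)]
      nlinarith [h x]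
  set S := p.roots.toFinset with hS
  have hevalp : ∀ x : ℝ, eval x p
      = (∏ ξ ∈ S, (x - ξ) ^ (p.roots.count ξ)) * eval x u := by
    intro x
    conv_lhs => rw [hu]
    rw [eval_mul]
    congr 1
    rw [Finset.prod_multiset_map_count, eval_prod]
    refine Finset.prod_congr rfl (fun ξ _ => ?_)
    rw [eval_pow, eval_sub, eval_X, eval_C]
  -- Stage 1 : the odd-multiplicity polynomial must have degree ≥ i
  have hstage1 : i ≤ ∑ ξ ∈ S, (if Odd (p.roots.count ξ) then 1 else 0) := by
    by_contra hlt
    push_neg at hlt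
    set q1 : Polynomial ℝ :=
      ∏ ξ ∈ S, (X - C ξ) ^ (if Odd (p.roots.count ξ) then 1 else 0) with hq1
    have hq1M : q1.Monic :=
      monic_prod_of_monic _ _ (fun ξ _ => (monic_X_sub_C ξ).pow _)
    have hq1deg : q1.natDegree = ∑ ξ ∈ S, (if Odd (p.roots.count ξ) then 1 else 0) := by
      rw [hq1, natDegree_prod_of_monic _ _ (fun ξ _ => (monic_X_sub_C ξ).pow _)]
      refine Finset.sum_congr rfl (fun ξ _ => ?_)
      rw [natDegree_pow, natDegree_X_sub_C, mul_one]
    have hdegle : q1.natDegree ≤ i - 1 := by omega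
    have hint0 : (∫ x, eval x p * eval x q1 ∂(jacobiMeasure a b)) = 0 := horth q1 hdegle
    have hposg : ∀ x : ℝ, 0 ≤ sgn * (eval x p * eval x q1) := by
      intro x
      rw [hevalp x, hq1, eval_prod]
      have hmerge : (∏ ξ ∈ S, (x - ξ) ^ (p.roots.count ξ))
          * (∏ ξ ∈ S, eval x ((X - C ξ) ^ (if Odd (p.roots.count ξ) then 1 else 0)))
          = ∏ ξ ∈ S, (x - ξ) ^ (p.roots.count ξ + (if Odd (p.roots.count ξ) then 1 else 0)) := by
        rw [← Finset.prod_mul_distrib]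
        refine Finset.prod_congr rfl (fun ξ _ => ?_)
        rw [eval_pow, eval_sub, eval_X, eval_C, pow_add]
      have hprodnn : 0 ≤ ∏ ξ ∈ S,
          (x - ξ) ^ (p.roots.count ξ + (if Odd (p.roots.count ξ) then 1 else 0)) := by
        refine Finset.prod_nonneg (fun ξ _ => ?_)
        refine Even.pow_nonneg ?_ _
        by_cases h : Odd (p.roots.count ξ)
        · rw [if_pos h]
          exact Odd.add_one h
        · rw [if_neg h, add_zero]
          exact Nat.not_odd_iff_even.mp h
      calc (0:ℝ) ≤ (sgn * eval x u) * ∏ ξ ∈ S,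
            (x - ξ) ^ (p.roots.count ξ + (if Odd (p.roots.count ξ) then 1 else 0)) :=
          mul_nonneg (hsgn_mul x) hprodnn
      _ = sgn * ((∏ ξ ∈ S, (x - ξ) ^ (p.roots.count ξ)) * eval x u
            * ∏ ξ ∈ S, eval x ((X - C ξ) ^ (if Odd (p.roots.count ξ) then 1 else 0))) := by
          rw [mul_assoc, ← hmerge]; ring
    refine integral_ne_zero_of_nonneg ha hb (C sgn * (p * q1))
      (mul_ne_zero (by simpa using hsgn_ne) (mul_ne_zero hp hq1M.ne_zero))
      (fun x _ => by rw [eval_mul, eval_C, eval_mul]; exact hposg x) ?_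
    have hfn : (fun x => eval x (C sgn * (p * q1))) = fun x => sgn * (eval x p * eval x q1) := by
      funext x; rw [eval_mul, eval_C, eval_mul]
    rw [hfn, integral_const_mul, hint0, mul_zero]
  have hchain1 : ∑ ξ ∈ S, (if Odd (p.roots.count ξ) then 1 else 0) ≤ S.card := by
    refine le_trans (Finset.sum_le_sum (fun ξ _ => ?_))
      (le_of_eq (by rw [Finset.sum_const, smul_eq_mul, mul_one]))
    split_ifs <;> omega
  have hchain2 : S.card ≤ Multiset.card p.roots := Multiset.toFinset_card_le _
  have hchain3 : Multiset.card p.roots ≤ i := hdeg ▸ card_roots' p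
  have hcard : Multiset.card p.roots = i := by omega
  have hScard : S.card = i := by omega
  have hsumcount : ∑ ξ ∈ S, p.roots.count ξ = i := by
    rw [hS, Multiset.toFinset_sum_count_eq, hcard]
  have hcount1 : ∀ ξ ∈ S, p.roots.count ξ = 1 := by
    have hle : ∀ ξ ∈ S, 1 ≤ p.roots.count ξ := by
      intro ξ hξ
      have : ξ ∈ p.roots := Multiset.mem_toFinset.mp hξ
      exact Multiset.one_le_count_iff_mem.mpr this
    have hsum_eq : ∑ ξ ∈ S, (1:ℕ) = ∑ ξ ∈ S, p.roots.count ξ := by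
      rw [hsumcount, Finset.sum_const, smul_eq_mul, mul_one, hScard]
    intro ξ hξ
    exact ((Finset.sum_eq_sum_iff_of_le hle).mp hsum_eq ξ hξ).symm
  refine ⟨hcard, ?_⟩
  -- Stage 2 : all roots lie in the open interval
  intro η hη
  by_contra hout
  have hηS : η ∈ S := Multiset.mem_toFinset.mpr hη
  set q2 : Polynomial ℝ := ∏ ξ ∈ S.erase η, (X - C ξ) with hq2
  have hq2M : q2.Monic := monic_prod_of_monic _ _ (fun ξ _ => monic_X_sub_C ξ)
  have hq2deg : q2.natDegree = i - 1 := by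
    rw [hq2, natDegree_prod_of_monic _ _ (fun ξ _ => monic_X_sub_C ξ)]
    simp only [natDegree_X_sub_C]
    rw [Finset.sum_const, smul_eq_mul, mul_one, Finset.card_erase_of_mem hηS, hScard]
  have hint0 : (∫ x, eval x p * eval x q2 ∂(jacobiMeasure a b)) = 0 :=
    horth q2 (le_of_eq hq2deg)
  -- sign of (x - η) on Ioo
  set τ : ℝ := if 1 ≤ η then -1 else 1 with hτ
  have hτ_ne : τ ≠ 0 := by rw [hτ]; split_ifs <;> norm_num
  have hτ_mul : ∀ x ∈ Ioo (-1:ℝ) 1, 0 ≤ τ * (x - η) := by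
    intro x hx
    rcases not_and_or.mp (fun hmem => hout hmem) with h | h
    · -- ¬ (-1 < η) : η ≤ -1
      push_neg at h
      rw [hτ, if_neg (by linarith)]
      simp only [one_mul]
      linarith [hx.1]
    · push_neg at h
      rw [hτ, if_pos h]
      nlinarith [hx.2]
  have hevalp1 : ∀ x : ℝ, eval x p = (x - η) * (∏ ξ ∈ S.erase η, (x - ξ)) * eval x u := by
    intro x
    rw [hevalp x]
    congr 1
    have : (∏ ξ ∈ S, (x - ξ) ^ (p.roots.count ξ)) = ∏ ξ ∈ S, (x - ξ) := by
      refine Finset.prod_congr rfl (fun ξ hξ => ?_)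
      rw [hcount1 ξ hξ, pow_one]
    rw [this, ← Finset.mul_prod_erase S _ hηS]
  have hposg : ∀ x ∈ Ioo (-1:ℝ) 1, 0 ≤ (sgn * τ) * (eval x p * eval x q2) := by
    intro x hx
    rw [hevalp1 x, hq2, eval_prod]
    have : (∏ ξ ∈ S.erase η, eval x (X - C ξ)) = ∏ ξ ∈ S.erase η, (x - ξ) := by
      refine Finset.prod_congr rfl (fun ξ _ => ?_)
      rw [eval_sub, eval_X, eval_C]
    rw [this]
    have hsq : 0 ≤ (∏ ξ ∈ S.erase η, (x - ξ)) * (∏ ξ ∈ S.erase η, (x - ξ)) :=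
      mul_self_nonneg _
    calc (0:ℝ) ≤ ((τ * (x - η)) * (sgn * eval x u))
          * ((∏ ξ ∈ S.erase η, (x - ξ)) * (∏ ξ ∈ S.erase η, (x - ξ))) :=
        mul_nonneg (mul_nonneg (hτ_mul x hx) (hsgn_mul x)) hsq
    _ = (sgn * τ) * ((x - η) * (∏ ξ ∈ S.erase η, (x - ξ)) * eval x u
          * ∏ ξ ∈ S.erase η, (x - ξ)) := by ring
  refine integral_ne_zero_of_nonneg ha hb (C (sgn * τ) * (p * q2))
    (mul_ne_zero (by simpa using mul_ne_zero hsgn_ne hτ_ne)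
      (mul_ne_zero hp hq2M.ne_zero))
    (fun x hx => by rw [eval_mul, eval_C, eval_mul]; exact hposg x hx) ?_
  have hfn : (fun x => eval x (C (sgn * τ) * (p * q2)))
      = fun x => (sgn * τ) * (eval x p * eval x q2) := by
    funext x; rw [eval_mul, eval_C, eval_mul]
  rw [hfn, integral_const_mul, hint0, mul_zero]

lemma multiset_derivs (R : Multiset ℝ) (hR : ∀ ξ ∈ R, ξ ∈ Ioo (-1:ℝ) 1) :
    eval (-1) (R.map fun ξ => X - C ξ).prod ≠ 0 ∧
    eval (-1) (derivative (R.map fun ξ => X - C ξ).prod)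
      = eval (-1) (R.map fun ξ => X - C ξ).prod * (-(R.map fun ξ => (1+ξ)⁻¹).sum) ∧
    eval (-1) (derivative (derivative (R.map fun ξ => X - C ξ).prod))
      = eval (-1) (R.map fun ξ => X - C ξ).prod *
        (((R.map fun ξ => (1+ξ)⁻¹).sum)^2 - (R.map fun ξ => ((1+ξ)⁻¹)^2).sum) := by
  induction R using Multiset.induction with
  | empty => simp
  | cons ξ R ih =>
    have hξ := hR ξ (Multiset.mem_cons_self _ _)
    obtain ⟨hP, hD1, hD2⟩ := ih (fun η hη => hR η (Multiset.mem_cons_of_mem hη))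
    have h1ξ : (0:ℝ) < 1 + ξ := by linarith [hξ.1]
    have hs : (1+ξ) * (1+ξ)⁻¹ = 1 := mul_inv_cancel₀ h1ξ.ne'
    set Q := (R.map fun ξ => X - C ξ).prod with hQ
    set P := eval (-1) Q with hPdef
    set A := (R.map fun ξ => (1+ξ)⁻¹).sum with hA
    set B := (R.map fun ξ => ((1+ξ)⁻¹)^2).sum with hB
    have hd : derivative ((X - C ξ) * Q) = Q + (X - C ξ) * derivative Q := by
      rw [derivative_mul, derivative_sub, derivative_X, derivative_C, sub_zero, one_mul]
    have hdd : derivative (derivative ((X - C ξ) * Q))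
        = derivative Q + (derivative Q + (X - C ξ) * derivative (derivative Q)) := by
      rw [hd, derivative_add, derivative_mul, derivative_sub, derivative_X, derivative_C,
        sub_zero, one_mul]
    simp only [Multiset.map_cons, Multiset.prod_cons, Multiset.sum_cons, ← hQ, ← hA, ← hB]
    have hev : eval (-1) ((X - C ξ) * Q) = (-1 - ξ) * P := by
      rw [eval_mul, eval_sub, eval_X, eval_C, hPdef]
    refine ⟨?_, ?_, ?_⟩
    · rw [hev]
      exact mul_ne_zero (by linarith) hP
    · rw [hd, eval_add, eval_mul, eval_sub, eval_X, eval_C, hD1, hev, ← hPdef]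
      linear_combination (-P) * hs
    · rw [hdd, eval_add, eval_add, eval_mul, eval_sub, eval_X, eval_C, hD1, hD2, hev]
      linear_combination (2*P*A) * hs

end JacobiProof

set_option maxHeartbeats 1000000 in
open JacobiProof in
/-- Lemma 2: the smallest root `ξ_i` of the degree-`i` Jacobi polynomial with
parameters `a, b > -1` satisfies `ξ_i = -1 + Θ(1/i²)`. -/
theorem jacobi_smallest_root_theta (a b : ℝ) (ha : -1 < a) (hb : -1 < b) :
    ∃ c > (0 : ℝ), ∃ C > (0 : ℝ), ∀ i : ℕ, 1 ≤ i →
      ∀ p : Polynomial ℝ, p ≠ 0 → p.natDegree = i →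
        (∀ q : Polynomial ℝ, q.natDegree ≤ i - 1 →
          (∫ x, p.eval x * q.eval x ∂(jacobiMeasure a b)) = 0) →
        ∃ ξ : ℝ, IsLeast { t : ℝ | p.IsRoot t } ξ ∧
          -1 + c / (i : ℝ) ^ 2 ≤ ξ ∧ ξ ≤ -1 + C / (i : ℝ) ^ 2 := by
  classical
  have hb1 : (0:ℝ) < b + 1 := by linarith
  have hb2 : (0:ℝ) < b + 2 := by linarith
  have hab2 : (0:ℝ) < a + b + 2 := by linarith
  have hab3 : (0:ℝ) < a + b + 3 := by linarith
  set m : ℝ := min 1 (a + b + 2) with hm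
  have hm0 : 0 < m := lt_min one_pos hab2
  refine ⟨2*(b+1)/(a+b+3), by positivity, 2*(b+1)*(b+2)/m, by positivity, ?_⟩
  intro i hi p hp hdeg horth
  set I : ℝ := (i : ℝ) with hI
  have hI1 : (1:ℝ) ≤ I := by rw [hI]; exact_mod_cast hi
  have hI0 : (0:ℝ) < I := by linarith
  set lam : ℝ := I * (I + a + b + 1) with hlam
  -- the differential equation
  have hODE := ODE ha hb hi p hp hdeg horth
  obtain ⟨hrel1, hrel2⟩ := eval_relations ha hb ((i:ℝ) * ((i:ℝ) + a + b + 1)) p hODE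
  -- root structure
  obtain ⟨hcard, hloc⟩ := roots_structure ha hb hi p hp hdeg horth
  have hfac := C_leadingCoeff_mul_prod_multiset_X_sub_C (p := p) (by rw [hcard, hdeg])
  obtain ⟨hPne, hD1, hD2⟩ := multiset_derivs p.roots hloc
  set P : ℝ := eval (-1) (p.roots.map fun ξ => X - C ξ).prod with hPdef
  set A : ℝ := (p.roots.map fun ξ => (1+ξ)⁻¹).sum with hA
  set B : ℝ := (p.roots.map fun ξ => ((1+ξ)⁻¹)^2).sum with hB
  set lc : ℝ := p.leadingCoeff with hlc
  have hlc0 : lc ≠ 0 := leadingCoeff_ne_zero.mpr hp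
  have he0 : eval (-1) p = lc * P := by
    conv_lhs => rw [← hfac]
    rw [eval_mul, eval_C]
  have hder : derivative p = C lc * derivative (p.roots.map fun ξ => X - C ξ).prod := by
    conv_lhs => rw [← hfac]
    rw [derivative_mul, derivative_C, zero_mul, zero_add]
  have he1 : eval (-1) (derivative p) = lc * (P * (-A)) := by
    rw [hder, eval_mul, eval_C, hD1]
  have he2 : eval (-1) (derivative (derivative p)) = lc * (P * (A^2 - B)) := by
    rw [hder, derivative_mul, derivative_C, zero_mul, zero_add, eval_mul, eval_C, hD2]
  have hlcP : lc * P ≠ 0 := mul_ne_zero hlc0 hPne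
  -- the two sum identities
  have hArel : 2*(b+1)*A = lam := by
    rw [he0, he1] at hrel1
    have hfactor : (lc * P) * (lam - 2*(b+1)*A) = 0 := by
      rw [hlam, hI]
      linear_combination hrel1
    rcases mul_eq_zero.mp hfactor with h | h
    · exact absurd h hlcP
    · linarith
  have hBrel : 2*(b+2)*(A^2 - B) = (a + b + 2 - lam) * (-A) := by
    rw [he1, he2] at hrel2
    have hfactor : (lc * P) * (2*(b+2)*(A^2 - B) - (a + b + 2 - lam) * (-A)) = 0 := by
      rw [hlam, hI]
      linear_combination hrel2
    rcases mul_eq_zero.mp hfactor with h | h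
    · exact absurd h hlcP
    · linarith
  -- the smallest root
  have hRne : p.roots ≠ 0 := by
    intro h
    rw [h] at hcard
    simp at hcard
    omega
  have hne : p.roots.toFinset.Nonempty := by
    rw [Multiset.toFinset_nonempty]
    exact hRne
  set ξ : ℝ := p.roots.toFinset.min' hne with hξdef
  have hξroot : ξ ∈ p.roots := Multiset.mem_toFinset.mp (p.roots.toFinset.min'_mem hne)
  have hξIoo := hloc ξ hξroot
  have h1ξ : (0:ℝ) < 1 + ξ := by linarith [hξIoo.1]
  have hleast : IsLeast { t : ℝ | p.IsRoot t } ξ := by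
    constructor
    · exact (mem_roots hp).mp hξroot
    · intro t ht
      exact p.roots.toFinset.min'_le t (Multiset.mem_toFinset.mpr ((mem_roots hp).mpr ht))
  -- nonnegativity facts about the sums
  have hmem_nonneg : ∀ y ∈ p.roots.map (fun η => (1+η)⁻¹), 0 ≤ y := by
    intro y hy
    obtain ⟨η, hη, rfl⟩ := Multiset.mem_map.mp hy
    have := hloc η hη
    have : (0:ℝ) < 1 + η := by linarith [this.1]
    positivity
  have hsA : (1+ξ)⁻¹ ≤ A :=
    Multiset.single_le_sum hmem_nonneg _ (Multiset.mem_map_of_mem _ hξroot)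
  have hBsA : B ≤ (1+ξ)⁻¹ * A := by
    have hle : ∀ η ∈ p.roots, ((1+η)⁻¹)^2 ≤ (1+ξ)⁻¹ * (1+η)⁻¹ := by
      intro η hη
      have hηIoo := hloc η hη
      have h1η : (0:ℝ) < 1 + η := by linarith [hηIoo.1]
      have hξη : ξ ≤ η := p.roots.toFinset.min'_le η (Multiset.mem_toFinset.mpr hη)
      have hinv : (1+η)⁻¹ ≤ (1+ξ)⁻¹ := by
        apply inv_anti₀ h1ξ
        linarith
      have h0 : (0:ℝ) ≤ (1+η)⁻¹ := by positivity
      calc ((1+η)⁻¹)^2 = (1+η)⁻¹ * (1+η)⁻¹ := sq ((1+η)⁻¹)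
      _ ≤ (1+ξ)⁻¹ * (1+η)⁻¹ := mul_le_mul_of_nonneg_right hinv h0
    calc B ≤ (p.roots.map fun η => (1+ξ)⁻¹ * (1+η)⁻¹).sum := by
          rw [hB]
          exact Multiset.sum_map_le_sum_map _ _ hle
    _ = (1+ξ)⁻¹ * A := by rw [hA, Multiset.sum_map_mul_left]
  have hApos : 0 < A := lt_of_lt_of_le (by positivity) hsA
  have hlampos : 0 < lam := by
    rw [← hArel]
    positivity
  have hBpos : 0 < B := by
    have : ((1+ξ)⁻¹)^2 ≤ B := by
      refine Multiset.single_le_sum ?_ _ (Multiset.mem_map_of_mem _ hξroot)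
      intro y hy
      obtain ⟨η, hη, rfl⟩ := Multiset.mem_map.mp hy
      positivity
    have h0 : (0:ℝ) < ((1+ξ)⁻¹)^2 := by positivity
    linarith
  -- lam bounds
  have hlam_le : lam ≤ (a+b+3) * I^2 := by
    rw [hlam]
    have key : a+b+1 ≤ (a+b+2)*I := by nlinarith [hI1, hab2]
    have key2 : I*(a+b+1) ≤ I*((a+b+2)*I) := mul_le_mul_of_nonneg_left key hI0.le
    linarith [key2]
  have hlam_ge : m * I^2 ≤ lam := by
    rw [hlam]
    rcases le_total (a+b+2) 1 with hc | hc
    · have hmeq : m = a + b + 2 := min_eq_right hc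
      rw [hmeq]
      have key : (a+b+1) * ((I-1)*I) ≤ 0 :=
        mul_nonpos_of_nonpos_of_nonneg (by linarith)
          (mul_nonneg (by linarith) hI0.le)
      nlinarith [key]
    · have hmeq : m = 1 := min_eq_left hc
      rw [hmeq]
      have key : 0 ≤ I * (a+b+1) := mul_nonneg hI0.le (by linarith)
      nlinarith [key]
  -- lower bound : lam * (1+ξ) ≥ 2(b+1)
  have hlow : 2*(b+1) ≤ lam * (1+ξ) := by
    have h1 : (1:ℝ) ≤ A * (1+ξ) := by
      have := mul_le_mul_of_nonneg_right hsA h1ξ.le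
      rwa [inv_mul_cancel₀ h1ξ.ne'] at this
    calc 2*(b+1) = 2*(b+1) * 1 := by ring
    _ ≤ 2*(b+1) * (A * (1+ξ)) := by nlinarith [h1]
    _ = (2*(b+1)*A) * (1+ξ) := by ring
    _ = lam * (1+ξ) := by rw [hArel]
  -- upper bound : lam * (1+ξ) ≤ 2(b+1)(b+2)
  have hA2B : A^2 ≤ (b+2) * B := by nlinarith [hArel, hBrel, hApos, hab2]
  have hupp : lam * (1+ξ) ≤ 2*(b+1)*(b+2) := by
    have h2 : (1+ξ) * B ≤ A := by
      have := mul_le_mul_of_nonneg_left hBsA h1ξ.le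
      rwa [← mul_assoc, mul_inv_cancel₀ h1ξ.ne', one_mul] at this
    have h3 : lam * (1+ξ) * B = 2*(b+1) * (A * ((1+ξ) * B)) := by
      rw [← hArel]; ring
    have h4 : lam * (1+ξ) * B ≤ 2*(b+1) * A^2 := by
      rw [h3, sq]
      nlinarith [h2, hApos, hb1]
    have h5 : lam * (1+ξ) * B ≤ 2*(b+1)*(b+2) * B := by
      calc lam * (1+ξ) * B ≤ 2*(b+1) * A^2 := h4
      _ ≤ 2*(b+1) * ((b+2) * B) := by nlinarith [hA2B, hb1]
      _ = 2*(b+1)*(b+2) * B := by ring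
    exact le_of_mul_le_mul_right h5 hBpos
  refine ⟨ξ, hleast, ?_, ?_⟩
  · -- -1 + c/I^2 ≤ ξ
    have : 2*(b+1)/(a+b+3) / I^2 ≤ 1 + ξ := by
      rw [div_div, div_le_iff₀ (by positivity : (0:ℝ) < (a+b+3) * I^2)]
      calc 2*(b+1) ≤ lam * (1+ξ) := hlow
      _ ≤ ((a+b+3) * I^2) * (1+ξ) := mul_le_mul_of_nonneg_right hlam_le h1ξ.le
      _ = (1+ξ) * ((a+b+3) * I^2) := by ring
    linarith
  · have : 1 + ξ ≤ 2*(b+1)*(b+2)/m / I^2 := by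
      rw [div_div, le_div_iff₀ (by positivity : (0:ℝ) < m * I^2)]
      calc (1+ξ) * (m * I^2) ≤ (1+ξ) * lam := mul_le_mul_of_nonneg_left hlam_ge h1ξ.le
      _ = lam * (1+ξ) := by ring
      _ ≤ 2*(b+1)*(b+2) := hupp
    linarith
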